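/- arXiv:2601.08144 — 8 statements merged into one kernel-verified Lean document; each statement's English description precedes it below -/
import Mathlib

section
/- Let P be the k×k companion matrix of a monic polynomial over F_q, and let A and B be matrices whose rows are rows x through y of P^a and rows x' through y' of P^b respectively, where 1 ≤ a < b and 1 ≤ x < y ≤ k-1, 1 ≤ x' < y' ≤ k-1. If every row of A lies in the row space of B, then every row of the matrix formed by rows x through y+1 of P^a lies in the row space of the matrix formed by rows x' through y'+1 of P^b. -/
/-- The companion matrix of a monic polynomial of degree `k`. -/
def companionMat {F : Type*} [Field F] {k : ℕ} (a : Fin k → F) :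
    Matrix (Fin k) (Fin k) F :=
  fun i j => if (i : ℕ) + 1 = k then -a j else if (j : ℕ) = (i : ℕ) + 1 then 1 else 0

lemma rowshift {F : Type*} [Field F] {k : ℕ} (co : Fin k → F)
    (P : Matrix (Fin k) (Fin k) F) (hP : P = companionMat co)
    (m : ℕ) (j : Fin k) (h : (j : ℕ) + 1 < k) :
    (P ^ m) ⟨(j : ℕ) + 1, h⟩ = Matrix.vecMul ((P ^ m) j) P := by
  have h1 : Matrix.vecMul ((P ^ m) j) P = (P ^ m * P) j := by
    funext i
    simp [Matrix.vecMul, Matrix.mul_apply, dotProduct]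
  have h2 : P ^ m * P = P * P ^ m := by
    rw [← pow_succ, ← pow_succ']
  rw [h1, h2]
  funext i
  rw [Matrix.mul_apply]
  rw [Finset.sum_eq_single (⟨(j : ℕ) + 1, h⟩ : Fin k)]
  · rw [hP]
    simp [companionMat, Nat.ne_of_lt h]
  · intro l _ hl
    rw [hP]
    simp only [companionMat, Nat.ne_of_lt h, if_false]
    rw [if_neg, zero_mul]
    intro hc
    exact hl (Fin.ext hc)
  · simp

/-- Let `P` be the `k×k` companion matrix of a monic polynomial over `F_q`, let
`1 ≤ a < b`, `1 ≤ x < y ≤ k-1` and `1 ≤ x' < y' ≤ k-1` (rows 1-indexed; a row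
`j : Fin k` has 1-indexed position `(j:ℕ)+1`).  If every row of `P^a` with index
in `[x, y]` lies in the row space of the rows of `P^b` with index in `[x', y']`,
then every row of `P^a` with index in `[x, y+1]` lies in the row space of the rows
of `P^b` with index in `[x', y'+1]`. -/
theorem stmt3 {F : Type*} [Field F] [Fintype F] {k : ℕ}
    (co : Fin k → F) (P : Matrix (Fin k) (Fin k) F) (hP : P = companionMat co)
    (a b x y x' y' : ℕ)
    (ha : 1 ≤ a) (hab : a < b)
    (hx : 1 ≤ x) (hxy : x < y) (hy : y ≤ k - 1)
    (hx' : 1 ≤ x') (hxy' : x' < y') (hy' : y' ≤ k - 1)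
    (H : ∀ j : Fin k, x ≤ (j : ℕ) + 1 → (j : ℕ) + 1 ≤ y →
      (P ^ a) j ∈ Submodule.span F
        {v : Fin k → F | ∃ l : Fin k, x' ≤ (l : ℕ) + 1 ∧ (l : ℕ) + 1 ≤ y' ∧ v = (P ^ b) l}) :
    ∀ j : Fin k, x ≤ (j : ℕ) + 1 → (j : ℕ) + 1 ≤ y + 1 →
      (P ^ a) j ∈ Submodule.span F
        {v : Fin k → F | ∃ l : Fin k, x' ≤ (l : ℕ) + 1 ∧ (l : ℕ) + 1 ≤ y' + 1 ∧ v = (P ^ b) l} := by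
  intro j hj1 hj2
  have hk : 0 < k := j.pos
  set S : Set (Fin k → F) :=
    {v : Fin k → F | ∃ l : Fin k, x' ≤ (l : ℕ) + 1 ∧ (l : ℕ) + 1 ≤ y' ∧ v = (P ^ b) l}
  set T : Set (Fin k → F) :=
    {v : Fin k → F | ∃ l : Fin k, x' ≤ (l : ℕ) + 1 ∧ (l : ℕ) + 1 ≤ y' + 1 ∧ v = (P ^ b) l}
  have hST : S ⊆ T := by
    rintro v ⟨l, h1, h2, h3⟩
    exact ⟨l, h1, le_trans h2 (Nat.le_succ _), h3⟩
  rcases lt_or_ge (j : ℕ) y with hlt | hge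
  · exact Submodule.span_mono hST (H j hj1 hlt)
  · -- (j : ℕ) = y
    have hjy : (j : ℕ) = y := by omega
    have hyk : y < k := lt_of_le_of_lt hy (Nat.pred_lt hk.ne')
    have hy1k : y - 1 + 1 < k := by omega
    set j' : Fin k := ⟨y - 1, by omega⟩
    have hj'1 : (j' : ℕ) + 1 = y := by simp [j']; omega
    have hjj' : j = ⟨(j' : ℕ) + 1, by omega⟩ := by
      apply Fin.ext; simp [hjy, hj'1]
    have hrow : (P ^ a) j = Matrix.vecMul ((P ^ a) j') P := by
      rw [hjj']; exact rowshift co P hP a j' (by omega)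
    have hmem : (P ^ a) j' ∈ Submodule.span F S := H j' (by omega) (by omega)
    have hmap : P.vecMulLinear ((P ^ a) j') ∈
        Submodule.map P.vecMulLinear (Submodule.span F S) :=
      Submodule.mem_map_of_mem hmem
    rw [Submodule.map_span] at hmap
    have himg : P.vecMulLinear '' S ⊆ T := by
      rintro v ⟨w, ⟨l, h1, h2, h3⟩, h4⟩
      have hlk : (l : ℕ) + 1 < k := by omega
      refine ⟨⟨(l : ℕ) + 1, hlk⟩, ?_, ?_, ?_⟩
      · simp; omega
      · simp; omega
      · rw [← h4, h3]
        rw [rowshift co P hP b l hlk]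
        rfl
    rw [hrow]
    exact Submodule.span_mono himg (by simpa using hmap)
end

section
/- Let t = (t_1, ..., t_r) with 1 ≤ t_1 < ... < t_r ≤ n-1, and let C be a flag code of type t on F_q^n. Suppose a = max{i : 2t_i ≤ n} exists with a ≥ 2, and let 1 ≤ ℓ ≤ a-1. If the minimum flag distance of C equals D^{(t,n)} - 2ℓ (where D^{(t,n)} is the maximum possible flag distance), then the i-projected codes satisfy |C_1| = |C_2| = ... = |C_a| = |C|. -/
/-- The subspace distance `d_S(U,V) = dim(U+V) - dim(U∩V)`. -/
noncomputable def subspaceDist {𝔽 : Type*} [Field 𝔽] {n : ℕ}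
    (U V : Submodule 𝔽 (Fin n → 𝔽)) : ℕ :=
  Module.finrank 𝔽 ↥(U ⊔ V) - Module.finrank 𝔽 ↥(U ⊓ V)

/-- `Fl` is a flag of type `t` on `𝔽^n`: a strictly increasing chain of subspaces
with `dim (Fl i) = t i`. -/
def IsFlag {𝔽 : Type*} [Field 𝔽] (n : ℕ) {r : ℕ} (t : Fin r → ℕ)
    (Fl : Fin r → Submodule 𝔽 (Fin n → 𝔽)) : Prop :=
  StrictMono Fl ∧ ∀ i, Module.finrank 𝔽 ↥(Fl i) = t i

/-- The flag distance `d_f(F,F') = Σ_i d_S(F_i, F'_i)`. -/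
noncomputable def flagDist {𝔽 : Type*} [Field 𝔽] {n r : ℕ}
    (Fl Fl' : Fin r → Submodule 𝔽 (Fin n → 𝔽)) : ℕ :=
  ∑ i, subspaceDist (Fl i) (Fl' i)

/-- The maximum possible flag distance
`D^{(t,n)} = 2(Σ_{t_i ≤ ⌊n/2⌋} t_i + Σ_{t_i > ⌊n/2⌋} (n - t_i))`. -/
def Dmax {r : ℕ} (t : Fin r → ℕ) (n : ℕ) : ℕ :=
  2 * ∑ i, (if 2 * t i ≤ n then t i else n - t i)

/-- Let `C` be a flag code of type `t` on `𝔽^n`, `a` the largest index with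
`2 t_a ≤ n` (assumed 1-indexed `a ≥ 2`, i.e. `(a:ℕ) ≥ 1` 0-indexed), and
`1 ≤ ℓ ≤ a - 1`.  If the minimum flag distance of `C` equals `D^{(t,n)} - 2ℓ`,
then `|C_1| = ... = |C_a| = |C|`. -/
theorem stmt5 {𝔽 : Type*} [Field 𝔽] [Fintype 𝔽] {n r : ℕ} (t : Fin r → ℕ)
    (ht : StrictMono t) (ht1 : ∀ i, 1 ≤ t i) (htn : ∀ i, t i ≤ n - 1)
    (C : Set (Fin r → Submodule 𝔽 (Fin n → 𝔽)))
    (hC : ∀ Fl ∈ C, IsFlag n t Fl)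
    (a : Fin r) (ha : IsGreatest {i : Fin r | 2 * t i ≤ n} a) (ha2 : 1 ≤ (a : ℕ))
    (ℓ : ℕ) (hℓ1 : 1 ≤ ℓ) (hℓ2 : ℓ ≤ (a : ℕ))
    (m : ℕ)
    (hmin : IsLeast {d : ℕ | ∃ Fl ∈ C, ∃ Fl' ∈ C, Fl ≠ Fl' ∧ d = flagDist Fl Fl'} m)
    (hm : m + 2 * ℓ = Dmax t n) :
    ∀ i : Fin r, i ≤ a → ((fun Fl => Fl i) '' C).ncard = C.ncard := by

  intro i hia
  -- It suffices to show the projection is injective on C.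
  apply Set.ncard_image_of_injOn
  intro Fl hFl Fl' hFl' hproj
  by_contra hne
  -- the flag distance is in the set, so m ≤ flagDist Fl Fl'
  have hmem : flagDist Fl Fl' ∈
      {d : ℕ | ∃ Fl ∈ C, ∃ Fl' ∈ C, Fl ≠ Fl' ∧ d = flagDist Fl Fl'} :=
    ⟨Fl, hFl, Fl', hFl', hne, rfl⟩
  have hml : m ≤ flagDist Fl Fl' := hmin.2 hmem
  -- lower bound on t
  have hlb : ∀ k : ℕ, ∀ h : k < r, k + 1 ≤ t ⟨k, h⟩ := by
    intro k
    induction k with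
    | zero => intro h; exact ht1 _
    | succ k ih =>
      intro h
      have h' : k < r := by omega
      have h1 := ih h'
      have h2 : t ⟨k, h'⟩ < t ⟨k + 1, h⟩ := ht (by simp [Fin.lt_def])
      omega
  -- key upper bound on the flag distance
  have hFlag := hC Fl hFl
  have hFlag' := hC Fl' hFl'
  have key : flagDist Fl Fl' + 2 * t i * (Finset.Icc i a).card ≤ Dmax t n := by
    have hsum : flagDist Fl Fl' + 2 * t i * (Finset.Icc i a).card
        = ∑ j, (subspaceDist (Fl j) (Fl' j)
            + if j ∈ Finset.Icc i a then 2 * t i else 0) := by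
      rw [Finset.sum_add_distrib]
      congr 1
      rw [Finset.sum_ite_mem, Finset.univ_inter, Finset.sum_const, smul_eq_mul,
        Nat.mul_comm]
    rw [hsum, Dmax, Finset.mul_sum]
    apply Finset.sum_le_sum
    intro j _
    have hrk : Module.finrank 𝔽 ↥(Fl j ⊔ Fl' j) + Module.finrank 𝔽 ↥(Fl j ⊓ Fl' j)
        = t j + t j := by
      rw [Submodule.finrank_sup_add_finrank_inf_eq, hFlag.2 j, hFlag'.2 j]
    have hrkn : Module.finrank 𝔽 ↥(Fl j ⊔ Fl' j) ≤ n := by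
      have := Submodule.finrank_le (Fl j ⊔ Fl' j)
      simpa [Module.finrank_fin_fun] using this
    by_cases hj : j ∈ Finset.Icc i a
    · rw [Finset.mem_Icc] at hj
      have h2tj : 2 * t j ≤ n := by
        have : t j ≤ t a := ht.monotone hj.2
        have := ha.1
        simp only [Set.mem_setOf_eq] at this
        omega
      rw [if_pos (Finset.mem_Icc.mpr hj), if_pos h2tj]
      -- Fl i = Fl' i ≤ Fl j ⊓ Fl' j
      have hle : Fl i ≤ Fl j ⊓ Fl' j := by
        refine le_inf (hFlag.1.monotone hj.1) ?_
        have : Fl' i ≤ Fl' j := hFlag'.1.monotone hj.1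
        simpa [hproj] using this
      have hinf : t i ≤ Module.finrank 𝔽 ↥(Fl j ⊓ Fl' j) := by
        have := Submodule.finrank_mono hle
        rwa [hFlag.2 i] at this
      have hinfle : Module.finrank 𝔽 ↥(Fl j ⊓ Fl' j) ≤ t j := by
        have := Submodule.finrank_mono (inf_le_left : Fl j ⊓ Fl' j ≤ Fl j)
        rwa [hFlag.2 j] at this
      unfold subspaceDist
      omega
    · rw [if_neg hj]
      by_cases h2tj : 2 * t j ≤ n
      · rw [if_pos h2tj]
        unfold subspaceDist
        omega
      · rw [if_neg h2tj]
        unfold subspaceDist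
        omega
  -- count of the interval
  have hcard : (Finset.Icc i a).card = (a : ℕ) + 1 - (i : ℕ) := by
    rw [Fin.card_Icc]
  have hia' : (i : ℕ) ≤ (a : ℕ) := hia
  -- t i * (a - i + 1) ≥ a + 1 ≥ ℓ + 1
  have hti : (i : ℕ) + 1 ≤ t i := by
    have := hlb i.1 i.2
    simpa using this
  obtain ⟨k, hk⟩ : ∃ k, (a : ℕ) = (i : ℕ) + k := ⟨(a : ℕ) - (i : ℕ), by omega⟩
  have hprod : ℓ + 1 ≤ t i * ((a : ℕ) + 1 - (i : ℕ)) := by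
    have h1 : ((i : ℕ) + 1) * (k + 1) ≤ t i * (k + 1) :=
      Nat.mul_le_mul_right _ hti
    have h2 : ((i : ℕ) + 1) * (k + 1) = (i : ℕ) * k + (i : ℕ) + k + 1 := by ring
    have h3 : (a : ℕ) + 1 - (i : ℕ) = k + 1 := by omega
    rw [h3]
    omega
  rw [hcard, Nat.mul_assoc] at key
  omega
end

section
/- If F ≠ F' are two flags of type t = (t_1,...,t_r) on F_q^n and there exists an index 1 ≤ i ≤ a (where 2t_a ≤ n) with F_i = F'_i, then d_f(F, F') ≤ D^{(t,n)} - 2·t_i·(a - i + 1). -/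
/-- If `F ≠ F'` are two flags of type `t` on `𝔽^n` agreeing in position `i ≤ a`,
where `2 t_a ≤ n`, then `d_f(F,F') ≤ D^{(t,n)} - 2 t_i (a - i + 1)`
(stated additively to avoid truncated subtraction). -/
theorem stmt6 {𝔽 : Type*} [Field 𝔽] [Fintype 𝔽] {n r : ℕ} (t : Fin r → ℕ)
    (ht : StrictMono t) (ht1 : ∀ i, 1 ≤ t i) (htn : ∀ i, t i ≤ n - 1)
    (Fl Fl' : Fin r → Submodule 𝔽 (Fin n → 𝔽))
    (hFl : IsFlag n t Fl) (hFl' : IsFlag n t Fl') (hne : Fl ≠ Fl')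
    (a i : Fin r) (ha : 2 * t a ≤ n) (hia : i ≤ a) (heq : Fl i = Fl' i) :
    flagDist Fl Fl' + 2 * t i * ((a : ℕ) - (i : ℕ) + 1) ≤ Dmax t n := by
  have key : ∀ j : Fin r, subspaceDist (Fl j) (Fl' j)
      + (if j ∈ Finset.Icc i a then 2 * t i else 0)
      ≤ 2 * (if 2 * t j ≤ n then t j else n - t j) := by
    intro j
    have hsum : Module.finrank 𝔽 ↥(Fl j ⊔ Fl' j) + Module.finrank 𝔽 ↥(Fl j ⊓ Fl' j)
        = t j + t j := by
      rw [Submodule.finrank_sup_add_finrank_inf_eq, hFl.2, hFl'.2]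
    have hsup : Module.finrank 𝔽 ↥(Fl j ⊔ Fl' j) ≤ n := by
      have := Submodule.finrank_le (Fl j ⊔ Fl' j)
      simpa using this
    have hinfle : Module.finrank 𝔽 ↥(Fl j ⊓ Fl' j) ≤ t j := by
      calc Module.finrank 𝔽 ↥(Fl j ⊓ Fl' j) ≤ Module.finrank 𝔽 ↥(Fl j) :=
            Submodule.finrank_mono inf_le_left
        _ = t j := hFl.2 j
    by_cases hj : j ∈ Finset.Icc i a
    · rw [if_pos hj]
      obtain ⟨hij, hja⟩ := Finset.mem_Icc.mp hj
      have hinf : t i ≤ Module.finrank 𝔽 ↥(Fl j ⊓ Fl' j) := by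
        have hle : Fl i ≤ Fl j ⊓ Fl' j :=
          le_inf (hFl.1.monotone hij) (heq ▸ hFl'.1.monotone hij)
        calc t i = Module.finrank 𝔽 ↥(Fl i) := (hFl.2 i).symm
          _ ≤ _ := Submodule.finrank_mono hle
      have htja : t j ≤ t a := ht.monotone hja
      have : 2 * t j ≤ n := by omega
      rw [if_pos this]
      unfold subspaceDist
      omega
    · rw [if_neg hj, add_zero]
      unfold subspaceDist
      by_cases h2 : 2 * t j ≤ n
      · rw [if_pos h2]; omega
      · rw [if_neg h2]; omega
  have hsumext : ∑ j : Fin r, (if j ∈ Finset.Icc i a then 2 * t i else 0)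
      = 2 * t i * ((a : ℕ) - (i : ℕ) + 1) := by
    rw [Finset.sum_ite_mem, Finset.univ_inter, Finset.sum_const, Fin.card_Icc]
    have : (i : ℕ) ≤ (a : ℕ) := hia
    rw [smul_eq_mul]
    have h2 : (a : ℕ) + 1 - (i : ℕ) = (a : ℕ) - (i : ℕ) + 1 := by omega
    rw [h2]; ring
  calc flagDist Fl Fl' + 2 * t i * ((a : ℕ) - (i : ℕ) + 1)
      = ∑ j : Fin r, (subspaceDist (Fl j) (Fl' j)
          + (if j ∈ Finset.Icc i a then 2 * t i else 0)) := by
        rw [Finset.sum_add_distrib, hsumext]; rfl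
    _ ≤ ∑ j : Fin r, 2 * (if 2 * t j ≤ n then t j else n - t j) :=
        Finset.sum_le_sum fun j _ => key j
    _ = Dmax t n := by rw [Dmax, Finset.mul_sum]
end

section
/- Let C be a full flag code on F_q^n (type t = (1,2,...,n-1)) and let 1 ≤ ℓ ≤ min{a-1, n-1-b}, where a = ⌊n/2⌋ and b = ⌈n/2⌉. If d_f(C) = D^{(t,n)} - 2ℓ, then C is cardinality-consistent: |C_i| = |C| for all 1 ≤ i ≤ n-1. -/
open Module

private lemma sd_le_rank {𝔽 : Type*} [Field 𝔽] {n k : ℕ}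
    {U V : Submodule 𝔽 (Fin n → 𝔽)}
    (hU : finrank 𝔽 U = k) (hV : finrank 𝔽 V = k) :
    subspaceDist U V ≤ 2 * k ∧ subspaceDist U V ≤ 2 * (n - k) := by
  have hs := Submodule.finrank_sup_add_finrank_inf_eq U V
  have h1 : finrank 𝔽 ↥(U ⊔ V) ≤ n := by
    have h := Submodule.finrank_le (U ⊔ V)
    simpa using h
  unfold subspaceDist
  omega

private lemma sd_step {𝔽 : Type*} [Field 𝔽] {n : ℕ}
    {U V U' V' : Submodule 𝔽 (Fin n → 𝔽)}
    (hU : U ≤ U') (hV : V ≤ V')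
    (hrU : finrank 𝔽 U' ≤ finrank 𝔽 U + 1)
    (hrV : finrank 𝔽 V' ≤ finrank 𝔽 V + 1) :
    subspaceDist U' V' ≤ subspaceDist U V + 2 ∧
    subspaceDist U V ≤ subspaceDist U' V' + 2 := by
  have hsupm : finrank 𝔽 ↥(U ⊔ V) ≤ finrank 𝔽 ↥(U' ⊔ V') :=
    Submodule.finrank_mono (sup_le_sup hU hV)
  have hinfm : finrank 𝔽 ↥(U ⊓ V) ≤ finrank 𝔽 ↥(U' ⊓ V') :=
    Submodule.finrank_mono (inf_le_inf hU hV)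
  -- sup grows by at most 2
  have e1 := Submodule.finrank_sup_add_finrank_inf_eq U' (U ⊔ V)
  have l1 : finrank 𝔽 U ≤ finrank 𝔽 ↥(U' ⊓ (U ⊔ V)) :=
    Submodule.finrank_mono (le_inf hU le_sup_left)
  have e2 := Submodule.finrank_sup_add_finrank_inf_eq V' (U' ⊔ (U ⊔ V))
  have l2 : finrank 𝔽 V ≤ finrank 𝔽 ↥(V' ⊓ (U' ⊔ (U ⊔ V))) :=
    Submodule.finrank_mono (le_inf hV (le_sup_right.trans le_sup_right))
  have l3 : finrank 𝔽 ↥(U' ⊔ V') ≤ finrank 𝔽 ↥(V' ⊔ (U' ⊔ (U ⊔ V))) :=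
    Submodule.finrank_mono (sup_le (le_sup_left.trans le_sup_right) le_sup_left)
  -- inf drops by at most 2
  have e3 := Submodule.finrank_sup_add_finrank_inf_eq (U' ⊓ V') U
  have l4 : finrank 𝔽 ↥((U' ⊓ V') ⊔ U) ≤ finrank 𝔽 U' :=
    Submodule.finrank_mono (sup_le inf_le_left hU)
  have e4 := Submodule.finrank_sup_add_finrank_inf_eq ((U' ⊓ V') ⊓ U) V
  have l5 : finrank 𝔽 ↥(((U' ⊓ V') ⊓ U) ⊔ V) ≤ finrank 𝔽 V' :=
    Submodule.finrank_mono (sup_le (inf_le_left.trans inf_le_right) hV)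
  have l6 : finrank 𝔽 ↥(((U' ⊓ V') ⊓ U) ⊓ V) ≤ finrank 𝔽 ↥(U ⊓ V) :=
    Submodule.finrank_mono (le_inf (inf_le_left.trans inf_le_right) inf_le_right)
  unfold subspaceDist
  omega

private lemma sd_chain {𝔽 : Type*} [Field 𝔽] {n : ℕ}
    {F G : Fin (n - 1) → Submodule 𝔽 (Fin n → 𝔽)}
    (hF : IsFlag n (fun i => (i : ℕ) + 1) F)
    (hG : IsFlag n (fun i => (i : ℕ) + 1) G) :
    ∀ (k : ℕ) (i j : Fin (n - 1)), (j : ℕ) = (i : ℕ) + k →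
      subspaceDist (F j) (G j) ≤ subspaceDist (F i) (G i) + 2 * k ∧
      subspaceDist (F i) (G i) ≤ subspaceDist (F j) (G j) + 2 * k := by
  have hrF : ∀ t : Fin (n - 1), finrank 𝔽 (F t) = (t : ℕ) + 1 := fun t => hF.2 t
  have hrG : ∀ t : Fin (n - 1), finrank 𝔽 (G t) = (t : ℕ) + 1 := fun t => hG.2 t
  intro k
  induction k with
  | zero =>
    intro i j h
    have : i = j := Fin.ext (by omega)
    subst this
    omega
  | succ k ih =>
    intro i j h
    have hi' : (i : ℕ) + k < n - 1 := by have := j.isLt; omega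
    have h1 := ih i ⟨(i : ℕ) + k, hi'⟩ rfl
    have hlt : (⟨(i : ℕ) + k, hi'⟩ : Fin (n - 1)) < j :=
      Fin.lt_def.mpr (show (i : ℕ) + k < (j : ℕ) by omega)
    have hvj : (j : ℕ) + 1 ≤ ((⟨(i : ℕ) + k, hi'⟩ : Fin (n - 1)) : ℕ) + 1 + 1 :=
      show (j : ℕ) + 1 ≤ (i : ℕ) + k + 1 + 1 by omega
    have hbF : finrank 𝔽 (F j) ≤ finrank 𝔽 (F ⟨(i : ℕ) + k, hi'⟩) + 1 := by
      rw [hrF j, hrF ⟨(i : ℕ) + k, hi'⟩]; exact hvj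
    have hbG : finrank 𝔽 (G j) ≤ finrank 𝔽 (G ⟨(i : ℕ) + k, hi'⟩) + 1 := by
      rw [hrG j, hrG ⟨(i : ℕ) + k, hi'⟩]; exact hvj
    have hstep := sd_step (le_of_lt (hF.1 hlt)) (le_of_lt (hG.1 hlt)) hbF hbG
    constructor <;> omega

private lemma mul_helper {u c a : ℕ} (hu : 1 ≤ u) (hc : 1 ≤ c)
    (h : u + c = a + 1) : a ≤ u * c := by
  obtain ⟨u', rfl⟩ := Nat.exists_eq_add_of_le hu
  obtain ⟨c', rfl⟩ := Nat.exists_eq_add_of_le hc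
  nlinarith [Nat.zero_le (u' * c')]

/-- The key counting bound: if `d` is dominated by the trivial bounds and by
`2 * |t - j|` (agreement at position `j`), then the total is at most
`Dmax - 2⌊n/2⌋`. -/
private lemma sum_bound {n : ℕ} (hn4 : 4 ≤ n)
    (d : Fin (n - 1) → ℕ) (j : Fin (n - 1))
    (h1 : ∀ t, d t ≤ 2 * ((t : ℕ) + 1))
    (h2 : ∀ t, d t ≤ 2 * (n - ((t : ℕ) + 1)))
    (h3 : ∀ t, d t ≤ 2 * (((t : ℕ) - (j : ℕ)) + ((j : ℕ) - (t : ℕ)))) :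
    ∑ t, d t + 2 * (n / 2) ≤
      2 * ∑ t : Fin (n - 1), (if 2 * ((t : ℕ) + 1) ≤ n then (t : ℕ) + 1 else n - ((t : ℕ) + 1)) := by
  set a := n / 2 with hadef
  have hdg : ∀ t : Fin (n - 1),
      d t ≤ 2 * (if 2 * ((t : ℕ) + 1) ≤ n then (t : ℕ) + 1 else n - ((t : ℕ) + 1)) := by
    intro t
    have := h1 t; have := h2 t
    split <;> omega
  have hgeneral : ∀ (lo hi : Fin (n - 1)) (w : ℕ), lo ≤ hi →
      (∀ t ∈ Finset.Icc lo hi, d t + 2 * w ≤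
        2 * (if 2 * ((t : ℕ) + 1) ≤ n then (t : ℕ) + 1 else n - ((t : ℕ) + 1))) →
      2 * a ≤ ((hi : ℕ) + 1 - (lo : ℕ)) * (2 * w) →
      ∑ t, d t + 2 * a ≤
        2 * ∑ t : Fin (n - 1), (if 2 * ((t : ℕ) + 1) ≤ n then (t : ℕ) + 1 else n - ((t : ℕ) + 1)) := by
    intro lo hi w hlohi hper hcardw
    classical
    set gg : Fin (n - 1) → ℕ :=
      fun t => if 2 * ((t : ℕ) + 1) ≤ n then (t : ℕ) + 1 else n - ((t : ℕ) + 1) with hgg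
    set S : Finset (Fin (n - 1)) := Finset.Icc lo hi with hS
    have hcard : S.card = (hi : ℕ) + 1 - (lo : ℕ) := by
      rw [hS, Fin.card_Icc]
    have hsum2 : ∑ t ∈ S, (d t + 2 * w) ≤ ∑ t ∈ S, 2 * gg t :=
      Finset.sum_le_sum hper
    have hsum3 : ∑ t ∈ S, (d t + 2 * w) = ∑ t ∈ S, d t + S.card * (2 * w) := by
      rw [Finset.sum_add_distrib, Finset.sum_const, smul_eq_mul]
    have hsplit : ∑ t ∈ Finset.univ \ S, d t + ∑ t ∈ S, d t = ∑ t, d t :=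
      Finset.sum_sdiff (Finset.subset_univ S)
    have hsplit2 : ∑ t ∈ Finset.univ \ S, 2 * gg t + ∑ t ∈ S, 2 * gg t = ∑ t, 2 * gg t :=
      Finset.sum_sdiff (Finset.subset_univ S)
    have hrest : ∑ t ∈ Finset.univ \ S, d t ≤ ∑ t ∈ Finset.univ \ S, 2 * gg t :=
      Finset.sum_le_sum (fun t _ => hdg t)
    have hq : 2 * a ≤ S.card * (2 * w) := by rw [hcard]; exact hcardw
    rw [show (2 : ℕ) * ∑ t, gg t = ∑ t, 2 * gg t from Finset.mul_sum _ _ _]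
    linarith
  rcases le_or_gt ((j : ℕ) + 1) a with hcase | hcase
  · -- j+1 ≤ a : take S = [j, a-1], weight w = j+1
    have hlt : a - 1 < n - 1 := by omega
    refine hgeneral j ⟨a - 1, hlt⟩ ((j : ℕ) + 1)
      (show (j : ℕ) ≤ a - 1 by omega) ?_ ?_
    · intro t ht
      rw [Finset.mem_Icc] at ht
      have ht1 : (j : ℕ) ≤ (t : ℕ) := ht.1
      have ht2 : (t : ℕ) ≤ a - 1 := ht.2
      have := h3 t
      rw [if_pos (show 2 * ((t : ℕ) + 1) ≤ n by omega)]
      omega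
    · show 2 * a ≤ (a - 1 + 1 - (j : ℕ)) * (2 * ((j : ℕ) + 1))
      have h := mul_helper (show 1 ≤ (j : ℕ) + 1 by omega)
        (show 1 ≤ a - 1 + 1 - (j : ℕ) by omega)
        (show (j : ℕ) + 1 + (a - 1 + 1 - (j : ℕ)) = a + 1 by omega)
      nlinarith
  · -- j+1 > a : take S = [n-a-1, j], weight w = n-(j+1)
    have hjub := j.isLt
    have hlt : n - a - 1 < n - 1 := by omega
    refine hgeneral ⟨n - a - 1, hlt⟩ j (n - ((j : ℕ) + 1))
      (show n - a - 1 ≤ (j : ℕ) by omega) ?_ ?_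
    · intro t ht
      rw [Finset.mem_Icc] at ht
      have ht1 : n - a - 1 ≤ (t : ℕ) := ht.1
      have ht2 : (t : ℕ) ≤ (j : ℕ) := ht.2
      have := h3 t
      split <;> omega
    · show 2 * a ≤ ((j : ℕ) + 1 - (n - a - 1)) * (2 * (n - ((j : ℕ) + 1)))
      have h := mul_helper (show 1 ≤ n - ((j : ℕ) + 1) by omega)
        (show 1 ≤ (j : ℕ) + 1 - (n - a - 1) by omega)
        (show n - ((j : ℕ) + 1) + ((j : ℕ) + 1 - (n - a - 1)) = a + 1 by omega)
      nlinarith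

/-- Let `C` be a full flag code on `𝔽^n` (type `(1,2,...,n-1)`), `a = ⌊n/2⌋`,
`b = ⌈n/2⌉`, and `1 ≤ ℓ ≤ min{a-1, n-1-b}`.  If the minimum flag distance of `C`
equals `D^{(t,n)} - 2ℓ`, then `C` is cardinality-consistent: `|C_i| = |C|` for all `i`. -/
theorem stmt7 {𝔽 : Type*} [Field 𝔽] [Fintype 𝔽] {n : ℕ}
    (C : Set (Fin (n - 1) → Submodule 𝔽 (Fin n → 𝔽)))
    (hC : ∀ Fl ∈ C, IsFlag n (fun i => (i : ℕ) + 1) Fl)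
    (ℓ : ℕ) (hℓ1 : 1 ≤ ℓ) (hℓa : ℓ ≤ n / 2 - 1) (hℓb : ℓ ≤ n - 1 - (n + 1) / 2)
    (m : ℕ)
    (hmin : IsLeast {d : ℕ | ∃ Fl ∈ C, ∃ Fl' ∈ C, Fl ≠ Fl' ∧ d = flagDist Fl Fl'} m)
    (hm : m + 2 * ℓ = Dmax (fun i : Fin (n - 1) => (i : ℕ) + 1) n) :
    ∀ i : Fin (n - 1), ((fun Fl => Fl i) '' C).ncard = C.ncard := by
  intro i
  have hn4 : 4 ≤ n := by omega
  apply Set.ncard_image_of_injOn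
  intro F hFC G hGC hij
  by_contra hne
  have hFG : F i = G i := hij
  have hmle : m ≤ flagDist F G := hmin.2 ⟨F, hFC, G, hGC, hne, rfl⟩
  have hF := hC F hFC
  have hG := hC G hGC
  have hb12 : ∀ t : Fin (n - 1), subspaceDist (F t) (G t) ≤ 2 * ((t : ℕ) + 1) ∧
      subspaceDist (F t) (G t) ≤ 2 * (n - ((t : ℕ) + 1)) :=
    fun t => sd_le_rank (hF.2 t) (hG.2 t)
  have hzero : subspaceDist (F i) (G i) = 0 := by
    rw [hFG]
    unfold subspaceDist
    rw [sup_idem, inf_idem, Nat.sub_self]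
  have hb3 : ∀ t : Fin (n - 1), subspaceDist (F t) (G t) ≤
      2 * (((t : ℕ) - (i : ℕ)) + ((i : ℕ) - (t : ℕ))) := by
    intro t
    rcases le_total (i : ℕ) (t : ℕ) with h | h
    · have := (sd_chain hF hG ((t : ℕ) - (i : ℕ)) i t (by omega)).1
      omega
    · have := (sd_chain hF hG ((i : ℕ) - (t : ℕ)) t i (by omega)).2
      omega
  have key : flagDist F G + 2 * (n / 2) ≤
      2 * ∑ t : Fin (n - 1), (if 2 * ((t : ℕ) + 1) ≤ n then (t : ℕ) + 1 else n - ((t : ℕ) + 1)) :=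
    sum_bound hn4 (fun t => subspaceDist (F t) (G t)) i
      (fun t => (hb12 t).1) (fun t => (hb12 t).2) hb3
  have hDmax : Dmax (fun i : Fin (n - 1) => (i : ℕ) + 1) n =
      2 * ∑ t : Fin (n - 1), (if 2 * ((t : ℕ) + 1) ≤ n then (t : ℕ) + 1 else n - ((t : ℕ) + 1)) := by
    unfold Dmax
    rfl
  rw [hDmax] at hm
  omega
end

section
/- If F ≠ F' are two full flags on F_q^n with F_i = F'_i for some index b ≤ i ≤ n-1 (where b = ⌈n/2⌉), then d_f(F,F') ≤ D^{(t,n)} - 2(n-i)(i-b+1), and in particular d_f(F,F') ≤ D^{(t,n)} - 2(n-b). -/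
/-- If `F ≠ F'` are full flags on `𝔽^n` with `F_i = F'_i` for some (1-indexed)
`b ≤ i ≤ n-1`, where `b = ⌈n/2⌉`, then
`d_f(F,F') ≤ D^{(t,n)} - 2(n-i)(i-b+1)`, and in particular
`d_f(F,F') ≤ D^{(t,n)} - 2(n-b)` (stated additively).  Here the index
`i : Fin (n-1)` has 1-indexed position `(i:ℕ)+1`. -/
theorem stmt8 {𝔽 : Type*} [Field 𝔽] [Fintype 𝔽] {n : ℕ}
    (Fl Fl' : Fin (n - 1) → Submodule 𝔽 (Fin n → 𝔽))
    (hFl : IsFlag n (fun i => (i : ℕ) + 1) Fl)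
    (hFl' : IsFlag n (fun i => (i : ℕ) + 1) Fl')
    (hne : Fl ≠ Fl')
    (i : Fin (n - 1)) (hbi : (n + 1) / 2 ≤ (i : ℕ) + 1) (heq : Fl i = Fl' i) :
    flagDist Fl Fl' + 2 * (n - ((i : ℕ) + 1)) * (((i : ℕ) + 1) - (n + 1) / 2 + 1)
        ≤ Dmax (fun j : Fin (n - 1) => (j : ℕ) + 1) n ∧
      flagDist Fl Fl' + 2 * (n - (n + 1) / 2)
        ≤ Dmax (fun j : Fin (n - 1) => (j : ℕ) + 1) n := by
  classical
  set b := (n + 1) / 2 with hb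
  have hin : (i : ℕ) < n - 1 := i.isLt
  have hn2 : 2 ≤ n := by omega
  -- basic dimension facts for every index j
  have hdim : ∀ j : Fin (n-1),
      Module.finrank 𝔽 ↥(Fl j ⊔ Fl' j) + Module.finrank 𝔽 ↥(Fl j ⊓ Fl' j)
        = ((j : ℕ) + 1) + ((j : ℕ) + 1) := by
    intro j
    rw [Submodule.finrank_sup_add_finrank_inf_eq, hFl.2 j, hFl'.2 j]
  have hsupn : ∀ j : Fin (n-1), Module.finrank 𝔽 ↥(Fl j ⊔ Fl' j) ≤ n := by
    intro j
    have := Submodule.finrank_le (Fl j ⊔ Fl' j)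
    rwa [Module.finrank_fin_fun] at this
  -- generic bound
  have hA : ∀ j : Fin (n-1),
      subspaceDist (Fl j) (Fl' j) ≤ 2 * (if 2 * ((j:ℕ)+1) ≤ n then (j:ℕ)+1 else n - ((j:ℕ)+1)) := by
    intro j
    have h1 := hdim j
    have h2 := hsupn j
    unfold subspaceDist
    split <;> omega
  -- improved bound for j ≤ i
  have hB : ∀ j : Fin (n-1), j ≤ i →
      subspaceDist (Fl j) (Fl' j) ≤ 2 * ((i:ℕ) - (j:ℕ)) := by
    intro j hj
    have hle : Fl j ⊔ Fl' j ≤ Fl i := by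
      apply sup_le (hFl.1.monotone hj)
      rw [heq]; exact hFl'.1.monotone hj
    have hdi : Module.finrank 𝔽 ↥(Fl j ⊔ Fl' j) ≤ (i:ℕ) + 1 := by
      have := Submodule.finrank_mono hle
      rwa [hFl.2 i] at this
    have h1 := hdim j
    have hji : (j:ℕ) ≤ (i:ℕ) := hj
    unfold subspaceDist
    omega
  -- the interval of special indices
  have hbi' : b - 1 < n - 1 := by omega
  set j0 : Fin (n-1) := ⟨b-1, hbi'⟩ with hj0
  have hcard : (Finset.Icc j0 i).card = (i:ℕ) + 1 - b + 1 := by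
    rw [Fin.card_Icc]
    simp only [hj0]
    omega
  have key : flagDist Fl Fl' + 2 * (n - ((i:ℕ)+1)) * (((i:ℕ)+1) - b + 1)
      ≤ Dmax (fun j : Fin (n-1) => (j:ℕ)+1) n := by
    have hsum : flagDist Fl Fl' + 2 * (n - ((i:ℕ)+1)) * (((i:ℕ)+1) - b + 1)
        = ∑ j : Fin (n-1), (subspaceDist (Fl j) (Fl' j)
            + if j ∈ Finset.Icc j0 i then 2 * (n - ((i:ℕ)+1)) else 0) := by
      rw [Finset.sum_add_distrib, Finset.sum_ite_mem, Finset.univ_inter,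
        Finset.sum_const, hcard, flagDist]
      simp only [smul_eq_mul]
      ring
    rw [hsum, Dmax, Finset.mul_sum]
    apply Finset.sum_le_sum
    intro j _
    by_cases hmem : j ∈ Finset.Icc j0 i
    · simp only [hmem, if_true]
      rw [Finset.mem_Icc] at hmem
      have hj1 : b - 1 ≤ (j:ℕ) := hmem.1
      have hj2 : (j:ℕ) ≤ (i:ℕ) := hmem.2
      have := hB j hmem.2
      have hbn : n ≤ 2 * b + 1 := by omega
      split <;> omega
    · simp only [hmem, if_false, add_zero]
      exact hA j
  refine ⟨key, le_trans ?_ key⟩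
  -- 2*(n-b) ≤ 2*(n-(i+1))*((i+1)-b+1)
  have h1 : 1 ≤ n - ((i:ℕ)+1) := by omega
  have h2 : 1 ≤ ((i:ℕ)+1) - b + 1 := by omega
  obtain ⟨x, hx⟩ := Nat.exists_eq_add_of_le h1
  obtain ⟨y, hy⟩ := Nat.exists_eq_add_of_le h2
  have : n - b ≤ (n - ((i:ℕ)+1)) * (((i:ℕ)+1) - b + 1) := by
    have hsum : (n - ((i:ℕ)+1)) + (((i:ℕ)+1) - b + 1) = n - b + 1 := by omega
    rw [hx, hy] at hsum ⊢
    ring_nf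
    nlinarith
  have h3 : 2*(n-((i:ℕ)+1))*(((i:ℕ)+1)-b+1) = 2*((n-((i:ℕ)+1))*(((i:ℕ)+1)-b+1)) := by
    ring
  omega
end

section
/- Let P be the companion matrix of a primitive polynomial of degree k+h over F_q with 1 ≤ h < k, let 1 ≤ a < b ≤ q^{k+h} - 1, and let k+1 ≤ m < k+h. Consider the (m)-row matrices A_a and A_b over F_q of size m×(2k+h), where A_c = [I_k | (P^c)^{(k)}; 0 | (P^c)^{[k+1,m]}] (first k rows being [I_k, first k rows of P^c], remaining m-k rows being [0, rows k+1 through m of P^c]). Then the rank of the vertical stack of A_a and A_b is at least m + k. Consequently d_S(rs(A_a), rs(A_b)) ≥ 2k. -/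
/-!
Subtracting `A a` from `A b` leaves `[0 | (P^b - P^a)^{(m)}]`, so the stacked matrix has the row
space of `[A a; A b - A a]`. The `m` rows of `A b - A a` are rows of the invertible matrix
`P^b - P^a`, and they vanish on the identity block, on which the first `k` rows of `A a` are
independent; hence the rank is at least `m + k`.

`P^b - P^a` is invertible because `𝔽[P]` has at most `q^{k+h}` elements yet contains an element of
order `q^{k+h} - 1`, so its units are all its nonzero elements, and `P^b ≠ P^a` as `0 < b - a`
is smaller than the order of `P`.

The distance bound is dimension counting: `dim (U ⊓ V) = dim U + dim V - dim (U ⊔ V) ≤ m - k`.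
-/

theorem isUnit_of_ne_zero_of_card_sub_one_le_orderOf {R : Type*} [Ring R] [Finite R] {x : R}
    (hx : Nat.card R - 1 ≤ orderOf x) {y : R} (hy : y ≠ 0) : IsUnit y := by
  have : Nontrivial R := ⟨⟨y, 0, hy⟩⟩
  have hR : 1 < Nat.card R := Finite.one_lt_card
  have hxfin : IsOfFinOrder x := orderOf_pos_iff.mp (by omega)
  let e : Rˣ → {r : R // r ≠ 0} := fun u => ⟨u, u.ne_zero⟩
  have he : Function.Injective e := fun u v h => Units.ext (congrArg Subtype.val h)
  have hebij : Function.Bijective e := by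
    refine he.bijective_of_nat_card_le ?_
    calc Nat.card {r : R // r ≠ 0} = Nat.card R - 1 := by
          classical
          have := Fintype.ofFinite R
          simp [Nat.card_eq_fintype_card, Fintype.card_subtype_compl]
      _ ≤ orderOf x := hx
      _ = orderOf hxfin.unit := by rw [← orderOf_units]; rfl
      _ ≤ Nat.card Rˣ := orderOf_le_card
  obtain ⟨u, hu⟩ := hebij.2 ⟨y, hy⟩
  exact ⟨u, congrArg Subtype.val hu⟩

namespace Matrix

variable {K n : Type*} [Field K] [Fintype n] [DecidableEq n]

theorem natDegree_minpoly_le (P : Matrix n n K) : (minpoly K P).natDegree ≤ Fintype.card n :=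
  (Polynomial.natDegree_le_of_dvd (minpoly_dvd_charpoly P) (charpoly_monic P).ne_zero).trans
    (charpoly_natDegree_eq_dim P).le

theorem finrank_adjoin_singleton_le (P : Matrix n n K) :
    Module.finrank K (Algebra.adjoin K {P}) ≤ Fintype.card n := by
  have hle : Subalgebra.toSubmodule (Algebra.adjoin K {P}) ≤
      Submodule.span K (Set.range fun i : Fin (minpoly K P).natDegree => P ^ (i : ℕ)) := by
    intro Y hY
    rw [Subalgebra.mem_toSubmodule, Algebra.adjoin_singleton_eq_range_aeval] at hY
    obtain ⟨f, rfl⟩ := hY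
    exact (isIntegral P).mem_span_pow ⟨f, rfl⟩
  calc Module.finrank K (Algebra.adjoin K {P})
      ≤ Module.finrank K (Submodule.span K (Set.range fun i : Fin (minpoly K P).natDegree =>
          P ^ (i : ℕ))) := Submodule.finrank_mono hle
    _ ≤ (minpoly K P).natDegree := (finrank_range_le_card _).trans_eq (Fintype.card_fin _)
    _ ≤ Fintype.card n := P.natDegree_minpoly_le

variable [Fintype K] {P : Matrix n n K}

theorem isUnit_of_mem_adjoin_of_orderOf_eq
    (hP : orderOf P = Fintype.card K ^ Fintype.card n - 1) {Y : Matrix n n K}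
    (hY : Y ∈ Algebra.adjoin K {P}) (hY0 : Y ≠ 0) : IsUnit Y := by
  set S := Algebra.adjoin K {P}
  have hcard : Nat.card S ≤ Fintype.card K ^ Fintype.card n := by
    rw [Module.natCard_eq_pow_finrank (K := K), Nat.card_eq_fintype_card]
    exact Nat.pow_le_pow_right Fintype.card_pos P.finrank_adjoin_singleton_le
  let P' : S := ⟨P, Algebra.self_mem_adjoin_singleton K P⟩
  have hord : orderOf P' = orderOf P :=
    (orderOf_injective S.val.toMonoidHom Subtype.val_injective P').symm
  have hunit := isUnit_of_ne_zero_of_card_sub_one_le_orderOf (x := P') (by omega)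
    (y := ⟨Y, hY⟩) (fun h => hY0 (congrArg Subtype.val h))
  simpa using hunit.map S.val

theorem isUnit_pow_sub_pow_of_orderOf_eq
    (hP : orderOf P = Fintype.card K ^ Fintype.card n - 1) {a b : ℕ} (ha : 0 < a) (hab : a < b)
    (hb : b ≤ orderOf P) : IsUnit (P ^ b - P ^ a) := by
  have hPfin : IsOfFinOrder P := orderOf_pos_iff.mp (by omega)
  have hmem := Algebra.self_mem_adjoin_singleton K P
  refine isUnit_of_mem_adjoin_of_orderOf_eq hP (sub_mem (pow_mem hmem b) (pow_mem hmem a)) ?_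
  rw [sub_ne_zero, Ne, hPfin.pow_eq_pow_iff_modEq]
  intro hmod
  have := Nat.le_of_dvd (by omega) ((Nat.modEq_iff_dvd' hab.le).mp hmod.symm)
  omega

end Matrix

theorem LinearIndependent.sumElim_of_comp {R M M' ι κ : Type*} [Ring R] [AddCommGroup M]
    [Module R M] [AddCommGroup M'] [Module R M'] {w : ι → M} {v : κ → M} (π : M →ₗ[R] M')
    (hw : LinearIndependent R w) (hπw : ∀ i, π (w i) = 0) (hv : LinearIndependent R (π ∘ v)) :
    LinearIndependent R (Sum.elim w v) :=
  LinearIndependent.sumElim_of_quotient (M' := LinearMap.ker π) (f := fun i => ⟨w i, hπw i⟩)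
    (.of_comp (LinearMap.ker π).subtype hw) v (.of_comp ((LinearMap.ker π).liftQ π le_rfl) hv)

namespace Matrix

variable {K m m' n : Type*} [Field K] [Fintype m] [Fintype n]

theorem rank_fromRows_eq_finrank_sup [Fintype m'] (X : Matrix m n K) (Y : Matrix m' n K) :
    (fromRows X Y).rank =
      Module.finrank K ↥(Submodule.span K (Set.range X) ⊔ Submodule.span K (Set.range Y)) := by
  rw [rank_eq_finrank_span_row, ← Submodule.span_union]
  exact congrArg (fun s => Module.finrank K (Submodule.span K s)) (Set.Sum.elim_range X Y)

theorem card_add_card_le_rank_fromRows {ι κ : Type*} [Fintype κ] (X Y : Matrix m n K)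
    (hYX : LinearIndependent K (Y - X)) (s : κ → m) (e : ι → n)
    (hagree : ∀ i j, Y i (e j) = X i (e j)) (hXse : LinearIndependent K (X.submatrix s e)) :
    Fintype.card m + Fintype.card κ ≤ (fromRows X Y).rank := by
  rw [rank_fromRows_eq_finrank_sup]
  have hli : LinearIndependent K (Sum.elim (Y - X) (X ∘ s)) :=
    hYX.sumElim_of_comp (LinearMap.funLeft K K e)
      (fun i => by ext j; simp [hagree]) hXse
  have hmem : Set.range (Sum.elim (Y - X) (X ∘ s)) ⊆
      (Submodule.span K (Set.range X) ⊔ Submodule.span K (Set.range Y) : Submodule K (n → K)) := by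
    rintro _ ⟨i | j, rfl⟩
    · exact sub_mem (Submodule.mem_sup_right (Submodule.subset_span (Set.mem_range_self i)))
        (Submodule.mem_sup_left (Submodule.subset_span (Set.mem_range_self i)))
    · exact Submodule.mem_sup_left (Submodule.subset_span (Set.mem_range_self (s j)))
  calc Fintype.card m + Fintype.card κ
      = Module.finrank K (Submodule.span K (Set.range (Sum.elim (Y - X) (X ∘ s)))) := by
        rw [finrank_span_eq_card hli, Fintype.card_sum]
    _ ≤ _ := Submodule.finrank_mono (Submodule.span_le.mpr hmem)

end Matrix

theorem two_mul_le_subspaceDist {K : Type*} [Field K] {n m k : ℕ} {U V : Submodule K (Fin n → K)}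
    (hU : Module.finrank K U ≤ m) (hV : Module.finrank K V ≤ m)
    (hUV : m + k ≤ Module.finrank K ↥(U ⊔ V)) : 2 * k ≤ subspaceDist U V := by
  have := Submodule.finrank_sup_add_finrank_inf_eq U V
  unfold subspaceDist
  omega

/-- Let `P` be the companion matrix of a primitive polynomial of degree `k+h` over
`𝔽 = F_q` (primitivity rendered as: `P` has multiplicative order `q^{k+h} - 1`),
`1 ≤ a < b ≤ q^{k+h} - 1` and `k+1 ≤ m < k+h`.  With
`A c = [I_k | (P^c)^{(k)} ; 0 | (P^c)^{[k+1,m]}]` (an `m × (2k+h)` matrix whose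
left `k` columns are `I_k` on the first `k` rows and `0` below, and whose right
`k+h` columns are the first `m` rows of `P^c`), the vertical stack of `A a` and
`A b` has rank at least `m + k`; consequently
`d_S(rs(A a), rs(A b)) ≥ 2k`. -/
theorem stmt11 {𝔽 : Type*} [Field 𝔽] [Fintype 𝔽] {k h : ℕ}
    (q : ℕ) (hq : q = Fintype.card 𝔽)
    (P : Matrix (Fin (k + h)) (Fin (k + h)) 𝔽)
    (hprim : orderOf P = q ^ (k + h) - 1)
    (a b m : ℕ) (ha : 1 ≤ a) (hab : a < b) (hb : b ≤ q ^ (k + h) - 1)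
    (hm1 : k + 1 ≤ m) (hm2 : m < k + h)
    (A : ℕ → Matrix (Fin m) (Fin (2 * k + h)) 𝔽)
    (hA : ∀ c : ℕ, ∀ i : Fin m, ∀ j : Fin (2 * k + h),
      A c i j =
        if hj : (j : ℕ) < k then (if (i : ℕ) = (j : ℕ) then 1 else 0)
        else (P ^ c) ⟨(i : ℕ), by have := i.isLt; omega⟩
          ⟨(j : ℕ) - k, by have := j.isLt; omega⟩) :
    m + k ≤ (Matrix.fromRows (A a) (A b)).rank ∧
      2 * k ≤ subspaceDist (Submodule.span 𝔽 (Set.range (A a)))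
        (Submodule.span 𝔽 (Set.range (A b))) := by
  subst hq
  have hZ : IsUnit (P ^ b - P ^ a) :=
    P.isUnit_pow_sub_pow_of_orderOf_eq (by simpa using hprim) ha hab (hprim ▸ hb)
  have hdiff : LinearIndependent 𝔽 (A b - A a) := by
    refine .of_comp (LinearMap.funLeft 𝔽 𝔽 fun t : Fin (k + h) => ⟨k + t, by omega⟩) ?_
    convert (Matrix.linearIndependent_rows_iff_isUnit.2 hZ).comp _ (Fin.castLE_injective hm2.le)
    ext i t
    change A b i ⟨k + t, by omega⟩ - A a i ⟨k + t, by omega⟩ =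
      (P ^ b) (Fin.castLE hm2.le i) t - (P ^ a) (Fin.castLE hm2.le i) t
    simp [hA, Fin.castLE]
  let s : Fin k → Fin m := Fin.castLE (by omega)
  let e : Fin k → Fin (2 * k + h) := Fin.castLE (by omega)
  have hid : (A a).submatrix s e = 1 := by
    ext i j
    simp [s, e, hA, Matrix.one_apply, Fin.val_inj]
  have hrank : m + k ≤ (Matrix.fromRows (A a) (A b)).rank := by
    simpa using Matrix.card_add_card_le_rank_fromRows (A a) (A b) hdiff s e
      (fun i j => by simp [e, hA]) (hid ▸ Matrix.linearIndependent_rows_iff_isUnit.2 isUnit_one)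
  refine ⟨hrank, two_mul_le_subspaceDist (finrank_range_le_card _) (finrank_range_le_card _) ?_⟩
  simpa [Matrix.rank_fromRows_eq_finrank_sup] using hrank
end

section
/- Let P be the companion matrix of a primitive polynomial of degree k+h over F_q (1 ≤ h < k), and let k+1 ≤ m < k+h. With A = [I_k | (P^k)^{(k)}; 0 | (P^k)^{[k+1,m]}] and B = [I_k | 0; 0 | I_{k+h}^{[k+1,m]}] (both m×(2k+h)), the rank of the vertical stack of A and B equals exactly m + k; hence d_S(rs(A), rs(B)) = 2k. -/
/-!
Since `P` has finite order it is invertible, hence so is `P^k`. For `i + k < k + h` the companion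
structure makes row `i` of `P^k` the unit vector `e_{i+k}`, so rows `k+1, …, m` of `B` are rows
`1, …, m-k` of `[0 | P^k]`. Consequently `rs A + rs B` is spanned by the `k` rows of `[I_k | 0]`
together with the `m` rows of `[0 | (P^k)^{(m)}]`, a block-triangular and hence independent family:
`dim (rs A + rs B) = m + k`. Both `A` and `B` have rank `m`, so `dim (rs A ∩ rs B) = m - k` and
`d_S = (m + k) - (m - k) = 2k`.
-/

theorem companionMat_pow_apply_of_add_lt {F : Type*} [Field F] {n : ℕ} (a : Fin n → F)
    (t : ℕ) (i c : Fin n) (hit : (i : ℕ) + t < n) :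
    (companionMat a ^ t) i c = if (c : ℕ) = i + t then 1 else 0 := by
  induction t generalizing i with
  | zero => simp [Matrix.one_apply, Fin.ext_iff, eq_comm]
  | succ t ih =>
    have hrow : ∀ b : Fin n,
        companionMat a i b = if (⟨i + 1, by omega⟩ : Fin n) = b then 1 else 0 := by
      intro b
      rw [companionMat, if_neg (by omega)]
      simp [Fin.ext_iff, eq_comm]
    simp only [pow_succ', Matrix.mul_apply, hrow, ite_mul, one_mul, zero_mul,
      Finset.sum_ite_eq, Finset.mem_univ, if_true]
    rw [ih _ (by simp; omega)]
    simp only [add_assoc, add_comm 1 t]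

theorem LinearIndependent.sumElim_of_comp_of_map_eq_zero {R M M' ι κ : Type*} [Ring R]
    [AddCommGroup M] [Module R M] [AddCommGroup M'] [Module R M'] {f : ι → M} {g : κ → M}
    (φ : M →ₗ[R] M') (hf : LinearIndependent R (φ ∘ f)) (hg : LinearIndependent R g)
    (hφg : ∀ j, φ (g j) = 0) : LinearIndependent R (Sum.elim f g) :=
  hf.of_comp.sum_type hg <| (Submodule.range_ker_disjoint hf).mono_right <|
    Submodule.span_le.2 <| Set.range_subset_iff.2 hφg

theorem subspaceDist_eq {K : Type*} [Field K] {n : ℕ} (U V : Submodule K (Fin n → K)) :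
    subspaceDist U V =
      2 * Module.finrank K ↥(U ⊔ V) - Module.finrank K U - Module.finrank K V := by
  have := Submodule.finrank_sup_add_finrank_inf_eq U V
  have := Submodule.finrank_mono (inf_le_left : U ⊓ V ≤ U)
  unfold subspaceDist
  omega

theorem Matrix.rank_fromRows_eq_finrank_sup_s12 {m₁ m₂ n K : Type*} [Fintype n] [Finite m₁]
    [Finite m₂] [Field K] (A : Matrix m₁ n K) (B : Matrix m₂ n K) :
    (Matrix.fromRows A B).rank =
      Module.finrank K ↥(Submodule.span K (Set.range A) ⊔ Submodule.span K (Set.range B)) := by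
  rw [Matrix.rank_eq_finrank_span_row, ← Submodule.span_union]
  exact congrArg (fun s => Module.finrank K ↥(Submodule.span K s)) (Set.Sum.elim_range A B)

section Blocks

variable {K : Type*} [Field K] {k h m : ℕ}

/-- The rows of `[I_k | 0]`. -/
def leftUnitRows (K : Type*) [Field K] (k h : ℕ) : Fin k → Fin (2 * k + h) → K :=
  fun i => Pi.single (Fin.castLE (by omega) i) 1

/-- The rows of `[0 | Q^{(m)}]`. -/
def rightBlockRows (hm : m ≤ k + h) (Q : Matrix (Fin (k + h)) (Fin (k + h)) K) :
    Fin m → Fin (2 * k + h) → K :=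
  fun i j => if hj : k ≤ (j : ℕ) then Q (Fin.castLE hm i) ⟨j - k, by omega⟩ else 0

/-- `A = [I_k | Q^{(k)} ; 0 | Q^{[k+1,m]}]`, to be taken with `Q = P^k`. -/
def matA (hm : m ≤ k + h) (Q : Matrix (Fin (k + h)) (Fin (k + h)) K) :
    Matrix (Fin m) (Fin (2 * k + h)) K :=
  fun i j => if (j : ℕ) < k then (if (i : ℕ) = j then 1 else 0)
    else Q (Fin.castLE hm i) ⟨j - k, by omega⟩

/-- `B = [I_k | 0 ; 0 | I_{k+h}^{[k+1,m]}]`. -/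
def matB (K : Type*) [Field K] (k h m : ℕ) : Matrix (Fin m) (Fin (2 * k + h)) K :=
  fun i j => if (j : ℕ) < k then (if (i : ℕ) = j then 1 else 0)
    else (if k ≤ (i : ℕ) ∧ (i : ℕ) = j - k then 1 else 0)

theorem linearIndependent_of_rightBlock_eq (hm : m ≤ k + h)
    {Q : Matrix (Fin (k + h)) (Fin (k + h)) K} (hQ : IsUnit Q) {v : Fin m → Fin (2 * k + h) → K}
    (hv : ∀ i (j : Fin (k + h)), v i ⟨k + j, by omega⟩ = Q (Fin.castLE hm i) j) :
    LinearIndependent K v := by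
  refine .of_comp (LinearMap.funLeft K K fun j : Fin (k + h) => ⟨k + j, by omega⟩) ?_
  convert (Matrix.linearIndependent_rows_iff_isUnit.2 hQ).comp _ (Fin.castLE_injective hm)
  ext i j
  exact hv i j

theorem linearIndependent_rightBlockRows (hm : m ≤ k + h)
    {Q : Matrix (Fin (k + h)) (Fin (k + h)) K} (hQ : IsUnit Q) :
    LinearIndependent K (rightBlockRows hm Q) :=
  linearIndependent_of_rightBlock_eq hm hQ fun i j => by
    simp [rightBlockRows]

theorem linearIndependent_matA (hm : m ≤ k + h)
    {Q : Matrix (Fin (k + h)) (Fin (k + h)) K} (hQ : IsUnit Q) :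
    LinearIndependent K (matA hm Q) :=
  linearIndependent_of_rightBlock_eq hm hQ fun i j => by
    simp [matA]

theorem linearIndependent_sumElim_leftUnitRows_rightBlockRows (hm : m ≤ k + h)
    {Q : Matrix (Fin (k + h)) (Fin (k + h)) K} (hQ : IsUnit Q) :
    LinearIndependent K (Sum.elim (leftUnitRows K k h) (rightBlockRows hm Q)) := by
  refine .sumElim_of_comp_of_map_eq_zero
    (LinearMap.funLeft K K (Fin.castLE (show k ≤ 2 * k + h by omega))) ?_
    (linearIndependent_rightBlockRows hm hQ) ?_
  · have : LinearMap.funLeft K K (Fin.castLE (show k ≤ 2 * k + h by omega)) ∘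
        leftUnitRows K k h = fun i => Pi.single i 1 := by
      ext i j
      simp [leftUnitRows, Pi.single_apply]
    rw [this]
    exact Pi.linearIndependent_single_one (Fin k) K
  · intro i
    ext j
    simp [rightBlockRows]

theorem matA_row_of_lt (hm : m ≤ k + h) (Q : Matrix (Fin (k + h)) (Fin (k + h)) K)
    (i : Fin m) (hi : (i : ℕ) < k) :
    matA hm Q i = leftUnitRows K k h ⟨i, hi⟩ + rightBlockRows hm Q i := by
  ext j
  simp only [matA, leftUnitRows, rightBlockRows, Pi.add_apply, Pi.single_apply, Fin.ext_iff,
    Fin.val_castLE]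
  split_ifs <;> first | omega | simp

theorem matA_row_of_le (hm : m ≤ k + h) (Q : Matrix (Fin (k + h)) (Fin (k + h)) K)
    (i : Fin m) (hi : k ≤ (i : ℕ)) :
    matA hm Q i = rightBlockRows hm Q i := by
  ext j
  simp only [matA, rightBlockRows]
  split_ifs <;> first | rfl | omega

theorem matB_row_of_lt (i : Fin m) (hi : (i : ℕ) < k) :
    matB K k h m i = leftUnitRows K k h ⟨i, hi⟩ := by
  ext j
  simp only [matB, leftUnitRows, Pi.single_apply, Fin.ext_iff, Fin.val_castLE]
  split_ifs <;> first | rfl | omega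

theorem matB_row_of_le (a : Fin (k + h) → K) (hm : m ≤ k + h) (i : Fin m) (hi : k ≤ (i : ℕ)) :
    matB K k h m i = rightBlockRows hm (companionMat a ^ k) ⟨i - k, by omega⟩ := by
  ext j
  simp only [matB, rightBlockRows]
  split_ifs
  all_goals first
    | rfl
    | omega
    | rw [companionMat_pow_apply_of_add_lt a k _ _ (by simp; omega)]; simp; omega

def matBIndex (k m : ℕ) : Fin m → Fin k ⊕ Fin m :=
  fun i => if hi : (i : ℕ) < k then .inl ⟨i, hi⟩ else .inr ⟨i - k, by omega⟩

theorem matBIndex_injective : Function.Injective (matBIndex k m) := by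
  intro i i' hii'
  simp only [matBIndex] at hii'
  split_ifs at hii' <;> simp [Fin.ext_iff] at hii' <;> omega

theorem matB_eq_comp_matBIndex (a : Fin (k + h) → K) (hm : m ≤ k + h) :
    matB K k h m =
      Sum.elim (leftUnitRows K k h) (rightBlockRows hm (companionMat a ^ k)) ∘ matBIndex k m := by
  ext1 i
  by_cases hi : (i : ℕ) < k
  · simp [matBIndex, hi, matB_row_of_lt]
  · simp [matBIndex, hi, matB_row_of_le a hm i (not_lt.1 hi)]

theorem span_matA_union_matB (a : Fin (k + h) → K) (hm : m ≤ k + h) (hkm : k ≤ m) :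
    Submodule.span K (Set.range (matA hm (companionMat a ^ k)) ∪ Set.range (matB K k h m)) =
      Submodule.span K
        (Set.range (Sum.elim (leftUnitRows K k h) (rightBlockRows hm (companionMat a ^ k)))) := by
  set Q := companionMat a ^ k
  apply le_antisymm <;> rw [Submodule.span_le]
  · rintro _ (⟨i, rfl⟩ | ⟨i, rfl⟩)
    · by_cases hi : (i : ℕ) < k
      · rw [matA_row_of_lt hm Q i hi]
        exact add_mem (Submodule.subset_span ⟨.inl _, rfl⟩) (Submodule.subset_span ⟨.inr i, rfl⟩)
      · rw [matA_row_of_le hm Q i (not_lt.1 hi)]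
        exact Submodule.subset_span ⟨.inr i, rfl⟩
    · rw [matB_eq_comp_matBIndex a hm]
      exact Submodule.subset_span (Set.range_comp_subset_range _ _ ⟨i, rfl⟩)
  · rintro _ ⟨i | i, rfl⟩
    · rw [Sum.elim_inl, ← matB_row_of_lt (m := m) ⟨i, by omega⟩ i.isLt]
      exact Submodule.subset_span (.inr ⟨_, rfl⟩)
    · by_cases hi : (i : ℕ) < k
      · have hdiff : rightBlockRows hm Q i = matA hm Q i - matB K k h m i := by
          rw [matA_row_of_lt hm Q i hi, matB_row_of_lt i hi, add_sub_cancel_left]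
        rw [Sum.elim_inr, hdiff]
        exact sub_mem (Submodule.subset_span (.inl ⟨_, rfl⟩))
          (Submodule.subset_span (.inr ⟨_, rfl⟩))
      · rw [Sum.elim_inr, ← matA_row_of_le hm Q i (not_lt.1 hi)]
        exact Submodule.subset_span (.inl ⟨_, rfl⟩)

theorem linearIndependent_matB (a : Fin (k + h) → K) (hm : m ≤ k + h)
    (hQ : IsUnit (companionMat a ^ k)) : LinearIndependent K (matB K k h m) := by
  rw [matB_eq_comp_matBIndex a hm]
  exact (linearIndependent_sumElim_leftUnitRows_rightBlockRows hm hQ).comp _ matBIndex_injective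

end Blocks

/-- Let `P` be the companion matrix of a primitive polynomial of degree `k+h` over
`𝔽 = F_q` (`1 ≤ h < k`; primitivity rendered as: `P` has multiplicative order
`q^{k+h} - 1`), and let `k+1 ≤ m < k+h`.  With
`A = [I_k | (P^k)^{(k)} ; 0 | (P^k)^{[k+1,m]}]` and
`B = [I_k | 0 ; 0 | I_{k+h}^{[k+1,m]}]` (both `m × (2k+h)`), the vertical stack of
`A` and `B` has rank exactly `m + k`; hence `d_S(rs A, rs B) = 2k`. -/
theorem stmt12 {𝔽 : Type*} [Field 𝔽] [Fintype 𝔽] {k h : ℕ}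
    (q : ℕ) (hq : q = Fintype.card 𝔽)
    (co : Fin (k + h) → 𝔽) (P : Matrix (Fin (k + h)) (Fin (k + h)) 𝔽)
    (hP : P = companionMat co) (hprim : orderOf P = q ^ (k + h) - 1)
    (m : ℕ) (hm1 : k + 1 ≤ m) (hm2 : m < k + h)
    (A B : Matrix (Fin m) (Fin (2 * k + h)) 𝔽)
    (hA : ∀ i : Fin m, ∀ j : Fin (2 * k + h),
      A i j =
        if hj : (j : ℕ) < k then (if (i : ℕ) = (j : ℕ) then 1 else 0)
        else (P ^ k) ⟨(i : ℕ), by have := i.isLt; omega⟩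
          ⟨(j : ℕ) - k, by have := j.isLt; omega⟩)
    (hB : ∀ i : Fin m, ∀ j : Fin (2 * k + h),
      B i j =
        if (j : ℕ) < k then (if (i : ℕ) = (j : ℕ) then 1 else 0)
        else (if k ≤ (i : ℕ) ∧ (i : ℕ) = (j : ℕ) - k then 1 else 0)) :
    (Matrix.fromRows A B).rank = m + k ∧
      subspaceDist (Submodule.span 𝔽 (Set.range A))
        (Submodule.span 𝔽 (Set.range B)) = 2 * k := by
  subst hP
  have hunit : IsUnit (companionMat co ^ k) := by
    refine (IsOfFinOrder.isUnit ?_).pow k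
    have hq2 : 1 < q := hq ▸ Fintype.one_lt_card
    have := Nat.one_lt_pow (show k + h ≠ 0 by omega) hq2
    rw [← orderOf_pos_iff, hprim]
    omega
  have hA' : A = matA hm2.le (companionMat co ^ k) := Matrix.ext hA
  have hB' : B = matB 𝔽 k h m := Matrix.ext hB
  have hsup : Module.finrank 𝔽 ↥(Submodule.span 𝔽 (Set.range A) ⊔
      Submodule.span 𝔽 (Set.range B)) = k + m := by
    rw [← Submodule.span_union, hA', hB', span_matA_union_matB co hm2.le (by omega),
      finrank_span_eq_card (linearIndependent_sumElim_leftUnitRows_rightBlockRows hm2.le hunit),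
      Fintype.card_sum, Fintype.card_fin, Fintype.card_fin]
  have hrkA : Module.finrank 𝔽 ↥(Submodule.span 𝔽 (Set.range A)) = m := by
    rw [hA', finrank_span_eq_card (linearIndependent_matA hm2.le hunit), Fintype.card_fin]
  have hrkB : Module.finrank 𝔽 ↥(Submodule.span 𝔽 (Set.range B)) = m := by
    rw [hB', finrank_span_eq_card (linearIndependent_matB co hm2.le hunit), Fintype.card_fin]
  refine ⟨by rw [Matrix.rank_fromRows_eq_finrank_sup_s12, hsup, add_comm], ?_⟩
  rw [subspaceDist_eq, hsup, hrkA, hrkB]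
  omega
end

section
/- Let n = sk + h with s ≥ 2, 0 ≤ h < k, and let C be an optimum distance flag code of type t = (t_1,...,t_r) on F_q^n such that some projected code C_i is a partial k-spread with |C_i| ≥ Σ_{j=1}^{s-1} q^{jk+h} + 1. Then every entry of t satisfies t_j ≤ k or t_j ≥ n - k. -/
open Module


private lemma aux_arith {q n s k h m N : ℕ} (hq : 2 ≤ q) (hs : 2 ≤ s) (hh : h < k)
    (hn : n = s * k + h) (hm : k + 1 ≤ m)
    (hN : (∑ j ∈ Finset.Icc 1 (s - 1), q ^ (j * k + h)) + 1 ≤ N)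
    (hle : N * (q ^ m - 1) ≤ q ^ n - 1) : False := by
  have hk : 1 ≤ k := by omega
  have hmem : s - 1 ∈ Finset.Icc 1 (s - 1) := by simp; omega
  have hA : q ^ ((s - 1) * k + h) + 1 ≤ N :=
    le_trans (by
      have := Finset.single_le_sum (f := fun j => q ^ (j * k + h))
        (fun _ _ => Nat.zero_le _) hmem
      omega) hN
  have hb : q ^ (k + 1) - 1 ≤ q ^ m - 1 :=
    Nat.sub_le_sub_right (Nat.pow_le_pow_right (by omega) hm) 1
  have h1 : (q ^ ((s - 1) * k + h) + 1) * (q ^ (k + 1) - 1) ≤ q ^ n - 1 :=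
    le_trans (Nat.mul_le_mul hA hb) hle
  have hexp : (s - 1) * k + h + (k + 1) = n + 1 := by
    have : (s - 1) * k = s * k - k := by rw [Nat.sub_one_mul]
    have hsk : k ≤ s * k := Nat.le_mul_of_pos_left k (by omega)
    omega
  have hab : q ^ ((s - 1) * k + h) * q ^ (k + 1) = q * q ^ n := by
    rw [← pow_add, hexp, pow_succ, mul_comm]
  have hale : q ^ ((s - 1) * k + h) ≤ q ^ n :=
    Nat.pow_le_pow_right (by omega) (by omega)
  have hbge : 2 ≤ q ^ (k + 1) := le_trans hq (Nat.le_self_pow (by omega) q)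
  have hX1 : 1 ≤ q ^ n := Nat.one_le_pow _ _ (by omega)
  have hqX : 2 * q ^ n ≤ q * q ^ n := Nat.mul_le_mul_right _ hq
  -- pass to integers
  set a := q ^ ((s - 1) * k + h)
  set b := q ^ (k + 1)
  set X := q ^ n
  have hb1 : 1 ≤ b := by omega
  have h1' : ((a : ℤ) + 1) * ((b : ℤ) - 1) ≤ (X : ℤ) - 1 := by
    zify [hb1, hX1] at h1
    linarith
  have hab' : (a : ℤ) * b = (q : ℤ) * X := by exact_mod_cast hab
  have hqX' : 2 * (X : ℤ) ≤ (q : ℤ) * X := by exact_mod_cast hqX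
  have hale' : (a : ℤ) ≤ X := by exact_mod_cast hale
  have hbge' : (2 : ℤ) ≤ b := by exact_mod_cast hbge
  nlinarith [h1', hab', hqX', hale', hbge']


private lemma aux_count {𝔽 V : Type*} [Field 𝔽] [Fintype 𝔽] [AddCommGroup V] [Module 𝔽 V]
    [Finite V] (S : Set (Submodule 𝔽 V)) (m : ℕ)
    (hdim : ∀ U ∈ S, finrank 𝔽 ↥U = m)
    (hpair : ∀ U ∈ S, ∀ W ∈ S, U ≠ W → U ⊓ W = ⊥) :
    S.ncard * (Fintype.card 𝔽 ^ m - 1) ≤ Fintype.card 𝔽 ^ (finrank 𝔽 V) - 1 := by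
  classical
  have : Fintype V := Fintype.ofFinite V
  haveI : Finite (Submodule 𝔽 V) :=
    Finite.of_injective (fun U : Submodule 𝔽 V => (U : Set V)) SetLike.coe_injective
  have hSfin : S.Finite := Set.toFinite S
  set T : Finset (Submodule 𝔽 V) := hSfin.toFinset with hT
  have hcardT : S.ncard = T.card := Set.ncard_eq_toFinset_card S hSfin
  set g : Submodule 𝔽 V → Finset V := fun U => ((U : Set V) \ {0}).toFinset with hg
  have hgcard : ∀ U ∈ T, (g U).card = Fintype.card 𝔽 ^ m - 1 := by
    intro U hU
    have hUS : U ∈ S := by rwa [hT, Set.Finite.mem_toFinset] at hU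
    have h0 : (0 : V) ∈ (U : Set V) := U.zero_mem
    have h1 : (g U).card = ((U : Set V) \ {0}).ncard := (Set.ncard_eq_toFinset_card' _).symm
    have h2 : ((U : Set V) \ {0}).ncard = (U : Set V).ncard - 1 :=
      Set.ncard_diff_singleton_of_mem h0
    have h3 : (U : Set V).ncard = Fintype.card 𝔽 ^ m := by
      rw [← Nat.card_coe_set_eq, Nat.card_eq_fintype_card]
      rw [show Fintype.card (U : Set V) = Fintype.card ↥U from rfl]
      rw [card_eq_pow_finrank (K := 𝔽) (V := ↥U), hdim U hUS]
    omega
  have hdisj : ∀ U ∈ T, ∀ W ∈ T, U ≠ W → Disjoint (g U) (g W) := by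
    intro U hU W hW hne
    rw [hT, Set.Finite.mem_toFinset] at hU hW
    rw [Finset.disjoint_left]
    intro x hxU hxW
    rw [hg, Set.mem_toFinset, Set.mem_diff, Set.mem_singleton_iff] at hxU hxW
    have : x ∈ U ⊓ W := ⟨hxU.1, hxW.1⟩
    rw [hpair U hU W hW hne] at this
    exact hxU.2 this
  have hbiU : (T.biUnion g).card = T.card * (Fintype.card 𝔽 ^ m - 1) := by
    rw [Finset.card_biUnion hdisj]
    rw [Finset.sum_congr rfl hgcard, Finset.sum_const, smul_eq_mul]
  have hsub : T.biUnion g ⊆ Finset.univ.erase (0 : V) := by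
    intro x hx
    rw [Finset.mem_biUnion] at hx
    obtain ⟨U, _, hxU⟩ := hx
    rw [hg, Set.mem_toFinset, Set.mem_diff, Set.mem_singleton_iff] at hxU
    exact Finset.mem_erase.2 ⟨hxU.2, Finset.mem_univ x⟩
  have := Finset.card_le_card hsub
  rw [hbiU, Finset.card_erase_of_mem (Finset.mem_univ _), Finset.card_univ,
    card_eq_pow_finrank (K := 𝔽) (V := V)] at this
  rw [hcardT]
  omega


/-- Let `n = sk + h` with `s ≥ 2`, `0 ≤ h < k`, and let `C` be an optimum distance
flag code of type `t` on `𝔽^n` (minimum flag distance equal to `D^{(t,n)}`) such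
that some projected code `C_i` is a partial `k`-spread of cardinality at least
`Σ_{j=1}^{s-1} q^{jk+h} + 1`.  Then every entry of `t` satisfies `t_j ≤ k` or
`t_j ≥ n - k`. -/
theorem stmt16 {𝔽 : Type*} [Field 𝔽] [Fintype 𝔽] {n s k h r : ℕ}
    (q : ℕ) (hq : q = Fintype.card 𝔽)
    (hs : 2 ≤ s) (hh : h < k) (hn : n = s * k + h)
    (t : Fin r → ℕ) (ht : StrictMono t) (ht1 : ∀ i, 1 ≤ t i) (htn : ∀ i, t i ≤ n - 1)
    (C : Set (Fin r → Submodule 𝔽 (Fin n → 𝔽)))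
    (hC : ∀ Fl ∈ C, IsFlag n t Fl)
    (hopt : IsLeast {d : ℕ | ∃ Fl ∈ C, ∃ Fl' ∈ C, Fl ≠ Fl' ∧ d = flagDist Fl Fl'}
      (Dmax t n))
    (i : Fin r) (Ci : Set (Submodule 𝔽 (Fin n → 𝔽)))
    (hCi : Ci = (fun Fl : Fin r → Submodule 𝔽 (Fin n → 𝔽) => Fl i) '' C)
    (hdim : ∀ U ∈ Ci, Module.finrank 𝔽 ↥U = k)
    (hspread : ∀ U ∈ Ci, ∀ V ∈ Ci, U ≠ V → U ⊓ V = ⊥)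
    (hcard : (∑ j ∈ Finset.Icc 1 (s - 1), q ^ (j * k + h)) + 1 ≤ Ci.ncard) :
    ∀ j : Fin r, t j ≤ k ∨ n - k ≤ t j := by
  classical
  have hq2 : 2 ≤ q := by rw [hq]; exact Fintype.one_lt_card
  have hk1 : 1 ≤ k := by omega
  have hn2 : 2 ≤ n := by
    have : 2 * 1 ≤ s * k := Nat.mul_le_mul hs hk1
    omega
  have hfr : finrank 𝔽 (Fin n → 𝔽) = n := Module.finrank_fin_fun 𝔽
  -- the key pointwise-distance equality
  have key : ∀ Fl ∈ C, ∀ Fl' ∈ C, Fl ≠ Fl' → ∀ m : Fin r,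
      subspaceDist (Fl m) (Fl' m) = 2 * (if 2 * t m ≤ n then t m else n - t m) := by
    intro Fl hFl Fl' hFl' hne
    have hDle : Dmax t n ≤ flagDist Fl Fl' := hopt.2 ⟨Fl, hFl, Fl', hFl', hne, rfl⟩
    have hub : ∀ m : Fin r, subspaceDist (Fl m) (Fl' m) ≤
        2 * (if 2 * t m ≤ n then t m else n - t m) := by
      intro m
      have h1 : finrank 𝔽 ↥(Fl m ⊔ Fl' m) + finrank 𝔽 ↥(Fl m ⊓ Fl' m) = t m + t m := by
        rw [Submodule.finrank_sup_add_finrank_inf_eq, (hC Fl hFl).2 m, (hC Fl' hFl').2 m]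
      have h2 : finrank 𝔽 ↥(Fl m ⊔ Fl' m) ≤ n := (Submodule.finrank_le _).trans_eq hfr
      unfold subspaceDist
      split <;> omega
    have hsum : ∑ m : Fin r, subspaceDist (Fl m) (Fl' m) =
        ∑ m : Fin r, 2 * (if 2 * t m ≤ n then t m else n - t m) := by
      have h3 : ∑ m : Fin r, subspaceDist (Fl m) (Fl' m) ≤
          ∑ m : Fin r, 2 * (if 2 * t m ≤ n then t m else n - t m) :=
        Finset.sum_le_sum fun m _ => hub m
      have h4 : Dmax t n = ∑ m : Fin r, 2 * (if 2 * t m ≤ n then t m else n - t m) := by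
        unfold Dmax; rw [Finset.mul_sum]
      unfold flagDist at hDle
      omega
    intro m
    exact (Finset.sum_eq_sum_iff_of_le fun m _ => hub m).1 hsum m (Finset.mem_univ m)
  -- structural consequences at each coordinate
  have props : ∀ Fl ∈ C, ∀ Fl' ∈ C, Fl ≠ Fl' → ∀ m : Fin r,
      Fl m ≠ Fl' m ∧ (2 * t m ≤ n → Fl m ⊓ Fl' m = ⊥) ∧
        (n < 2 * t m → Fl m ⊔ Fl' m = ⊤) := by
    intro Fl hFl Fl' hFl' hne m
    have hk := key Fl hFl Fl' hFl' hne m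
    have h1 : finrank 𝔽 ↥(Fl m ⊔ Fl' m) + finrank 𝔽 ↥(Fl m ⊓ Fl' m) = t m + t m := by
      rw [Submodule.finrank_sup_add_finrank_inf_eq, (hC Fl hFl).2 m, (hC Fl' hFl').2 m]
    have h2 : finrank 𝔽 ↥(Fl m ⊔ Fl' m) ≤ n := (Submodule.finrank_le _).trans_eq hfr
    have htm1 : 1 ≤ t m := ht1 m
    have htmn : t m ≤ n - 1 := htn m
    unfold subspaceDist at hk
    by_cases hcase : 2 * t m ≤ n
    · rw [if_pos hcase] at hk
      have hinf0 : finrank 𝔽 ↥(Fl m ⊓ Fl' m) = 0 := by omega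
      have hbot : Fl m ⊓ Fl' m = ⊥ := Submodule.finrank_eq_zero.1 hinf0
      refine ⟨?_, fun _ => hbot, fun hlt => absurd hcase (by omega)⟩
      intro hEq
      rw [hEq, inf_idem] at hbot
      have := (hC Fl' hFl').2 m
      rw [hbot, finrank_bot] at this
      omega
    · rw [if_neg hcase] at hk
      have hsupn : finrank 𝔽 ↥(Fl m ⊔ Fl' m) = n := by omega
      have htop : Fl m ⊔ Fl' m = ⊤ := Submodule.eq_top_of_finrank_eq (by rw [hsupn, hfr])
      refine ⟨?_, fun hle => absurd hle hcase, fun _ => htop⟩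
      intro hEq
      rw [hEq, sup_idem] at htop
      have := (hC Fl' hFl').2 m
      rw [htop, finrank_top, hfr] at this
      omega
  -- finiteness and injectivity of projections
  haveI : Finite (Submodule 𝔽 (Fin n → 𝔽)) :=
    Finite.of_injective (fun U : Submodule 𝔽 (Fin n → 𝔽) => (U : Set (Fin n → 𝔽)))
      SetLike.coe_injective
  have hinj : ∀ m : Fin r, Set.InjOn (fun Fl : Fin r → Submodule 𝔽 (Fin n → 𝔽) => Fl m) C := by
    intro m Fl hFl Fl' hFl' hEq
    by_contra hne
    exact (props Fl hFl Fl' hFl' hne m).1 hEq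
  have hcardproj : ∀ m : Fin r,
      ((fun Fl : Fin r → Submodule 𝔽 (Fin n → 𝔽) => Fl m) '' C).ncard = C.ncard :=
    fun m => Set.ncard_image_of_injOn (hinj m)
  have hcardC : (∑ j ∈ Finset.Icc 1 (s - 1), q ^ (j * k + h)) + 1 ≤ C.ncard := by
    rw [hCi, hcardproj i] at hcard; exact hcard
  -- main argument
  intro j
  by_contra hcon
  push_neg at hcon
  obtain ⟨hjk, hjnk⟩ := hcon
  have hjk' : k < t j := hjk
  have hjnk' : t j < n - k := hjnk
  set Sj : Set (Submodule 𝔽 (Fin n → 𝔽)) :=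
    (fun Fl : Fin r → Submodule 𝔽 (Fin n → 𝔽) => Fl j) '' C with hSj
  have hSjcard : (∑ j ∈ Finset.Icc 1 (s - 1), q ^ (j * k + h)) + 1 ≤ Sj.ncard := by
    rw [hSj, hcardproj j]; exact hcardC
  have hSjdim : ∀ U ∈ Sj, finrank 𝔽 ↥U = t j := by
    rintro U ⟨Fl, hFl, rfl⟩
    exact (hC Fl hFl).2 j
  by_cases hcase : 2 * t j ≤ n
  · -- Sj is a partial (t j)-spread
    have hpair : ∀ U ∈ Sj, ∀ W ∈ Sj, U ≠ W → U ⊓ W = ⊥ := by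
      rintro U ⟨Fl, hFl, rfl⟩ W ⟨Fl', hFl', rfl⟩ hne
      have hne' : Fl ≠ Fl' := fun hEq => hne (by rw [hEq])
      exact (props Fl hFl Fl' hFl' hne' j).2.1 hcase
    have hcount := aux_count Sj (t j) hSjdim hpair
    rw [hfr, ← hq] at hcount
    exact aux_arith hq2 hs hh hn (by omega : k + 1 ≤ t j) hSjcard hcount
  · -- dualize
    push_neg at hcase
    set D := fun U : Submodule 𝔽 (Fin n → 𝔽) => U.dualAnnihilator with hD
    set S : Set (Submodule 𝔽 (Module.Dual 𝔽 (Fin n → 𝔽))) := D '' Sj with hS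
    haveI : Finite (Module.Dual 𝔽 (Fin n → 𝔽)) :=
      Finite.of_injective (fun f : Module.Dual 𝔽 (Fin n → 𝔽) => (f : (Fin n → 𝔽) → 𝔽))
        DFunLike.coe_injective
    have hfrD : finrank 𝔽 (Module.Dual 𝔽 (Fin n → 𝔽)) = n := by
      rw [Subspace.dual_finrank_eq, hfr]
    have hDdim : ∀ U ∈ Sj, finrank 𝔽 ↥(D U) = n - t j := by
      intro U hU
      have h1 : finrank 𝔽 ↥(D U) = finrank 𝔽 ((Fin n → 𝔽) ⧸ U) :=
        (LinearEquiv.finrank_eq (Subspace.quotEquivAnnihilator U)).symm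
      have h2 : finrank 𝔽 ((Fin n → 𝔽) ⧸ U) + finrank 𝔽 ↥U = n := by
        rw [Submodule.finrank_quotient_add_finrank, hfr]
      have h3 := hSjdim U hU
      omega
    have hbotDD : ∀ U ∈ Sj, ∀ W ∈ Sj, U ≠ W → D U ⊓ D W = ⊥ := by
      intro U hU W hW hUW
      obtain ⟨Fl, hFl, rfl⟩ := hU
      obtain ⟨Fl', hFl', rfl⟩ := hW
      have hne' : Fl ≠ Fl' := fun hEq => hUW (by rw [hEq])
      have htop : Fl j ⊔ Fl' j = ⊤ := (props Fl hFl Fl' hFl' hne' j).2.2 hcase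
      rw [hD, ← Submodule.dualAnnihilator_sup_eq, htop, Submodule.dualAnnihilator_top]
    have hpairD : ∀ X ∈ S, ∀ Y ∈ S, X ≠ Y → X ⊓ Y = ⊥ := by
      rintro X ⟨U, hU, rfl⟩ Y ⟨W, hW, rfl⟩ hne
      exact hbotDD U hU W hW (fun hEq => hne (by rw [hEq]))
    have hinjD : Set.InjOn D Sj := by
      intro U hU W hW hEq
      by_contra hne
      have hbot := hbotDD U hU W hW hne
      rw [hEq, inf_idem] at hbot
      have hrk := hDdim W hW
      rw [hbot, finrank_bot] at hrk
      have := htn j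
      omega
    have hScard : (∑ j ∈ Finset.Icc 1 (s - 1), q ^ (j * k + h)) + 1 ≤ S.ncard := by
      rw [hS, Set.ncard_image_of_injOn hinjD]; exact hSjcard
    have hSdim : ∀ X ∈ S, finrank 𝔽 ↥X = n - t j := by
      rintro X ⟨U, hU, rfl⟩
      exact hDdim U hU
    have hcount := aux_count S (n - t j) hSdim hpairD
    rw [hfrD, ← hq] at hcount
    exact aux_arith hq2 hs hh hn (by omega : k + 1 ≤ n - t j) hScard hcount
end
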